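/- Suppose σ_b = 0 and x, x' ∈ ℝ^d are nonzero. Then for every ℓ ≥ 0: K^(ℓ)(x,x') = ‖x‖·‖x'‖·ρ^ℓ( ⟨x,x'⟩ / (‖x‖·‖x'‖) ), where ρ^ℓ is the ℓ-fold iterate of ρ; consequently ‖x‖·‖x'‖·ρ^ℓ(−1) ≤ K^(ℓ)(x,x') ≤ ‖x‖·‖x'‖·ρ^ℓ(1) = ‖x‖·‖x'‖. -/

import Mathlib

open Real

/-- The dual activation function of the scaled ReLU `φ(t) = √2·max(t,0)`. -/
noncomputable def rho (r : ℝ) : ℝ :=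
  (1 / π) * (Real.sqrt (1 - r ^ 2) + (π - Real.arccos r) * r)

/-- The dual activation function of the derivative of the scaled ReLU. -/
noncomputable def rhoPrime (r : ℝ) : ℝ := (π - Real.arccos r) / π

/-- The depth-`ℓ` NNGP kernel `K^(ℓ)` of a ReLU network with bias variance `σb²`,
defined recursively by `K^(0)(v,w) = ⟪v,w⟫` and
`K^(ℓ)(v,w) = √(K^(ℓ−1)(v,v)·K^(ℓ−1)(w,w))·ρ(K^(ℓ−1)(v,w)/√(K^(ℓ−1)(v,v)·K^(ℓ−1)(w,w))) + σb²`. -/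
noncomputable def Kker (σb : ℝ) {d : ℕ} :
    ℕ → EuclideanSpace ℝ (Fin d) → EuclideanSpace ℝ (Fin d) → ℝ
  | 0, v, w => (inner ℝ v w : ℝ)
  | ℓ + 1, v, w =>
      Real.sqrt (Kker σb ℓ v v * Kker σb ℓ w w) *
        rho (Kker σb ℓ v w / Real.sqrt (Kker σb ℓ v v * Kker σb ℓ w w)) + σb ^ 2

/-- `u^(ℓ) = (‖x‖² + ℓσ_b²)·(‖x'‖² + ℓσ_b²)`, stated for the norms `a = ‖x‖`, `b = ‖x'‖`. -/
noncomputable def uFun (σb a b : ℝ) (ℓ : ℕ) : ℝ :=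
  (a ^ 2 + ℓ * σb ^ 2) * (b ^ 2 + ℓ * σb ^ 2)

/-! With `σ_b = 0` the diagonal `K^(ℓ)(v,v) = ‖v‖²` does not move, because `ρ 1 = 1`; hence the
recursion for `K^(ℓ)(x,x')` only iterates `ρ` on the cosine `⟪x,x'⟫/(‖x‖‖x'‖) ∈ [-1,1]`. Since
`ρ' = rhoPrime ≥ 0`, `ρ` is monotone on `[-1,1]` and maps it into itself, so every `ρ^[ℓ]` is
monotone there and the bounds follow from `-1 ≤ cos ≤ 1` and `ρ^[ℓ] 1 = 1`. -/

theorem MonotoneOn.iterate {α : Type*} [Preorder α] {f : α → α} {s : Set α}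
    (hf : MonotoneOn f s) (hs : Set.MapsTo f s s) (n : ℕ) : MonotoneOn f^[n] s := by
  induction n with
  | zero => exact monotoneOn_id
  | succ n ih =>
    rw [Function.iterate_succ']
    exact hf.comp ih (hs.iterate n)

lemma rho_one : rho 1 = 1 := by
  simp [rho]

lemma rho_neg_one : rho (-1) = 0 := by
  simp [rho]

lemma hasDerivAt_rho {r : ℝ} (h₁ : -1 < r) (h₂ : r < 1) : HasDerivAt rho (rhoPrime r) r := by
  have hpos : 0 < 1 - r ^ 2 := by nlinarith
  have hsqrt : HasDerivAt (fun t => √(1 - t ^ 2)) (-(2 * r) / (2 * √(1 - r ^ 2))) r := by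
    simpa using ((hasDerivAt_pow 2 r).const_sub 1).sqrt hpos.ne'
  have harccos : HasDerivAt (fun t => (π - arccos t) * t)
      (1 / √(1 - r ^ 2) * r + (π - arccos r)) r := by
    simpa using ((hasDerivAt_arccos h₁.ne' h₂.ne).const_sub π).fun_mul (hasDerivAt_id' r)
  refine ((hsqrt.add harccos).const_mul (1 / π)).congr_deriv ?_
  have hs : √(1 - r ^ 2) ≠ 0 := (sqrt_pos.mpr hpos).ne'
  unfold rhoPrime
  field_simp
  ring

lemma monotoneOn_rho : MonotoneOn rho (Set.Icc (-1) 1) := by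
  have hcont : Continuous rho := by unfold rho; fun_prop
  refine monotoneOn_of_deriv_nonneg (convex_Icc _ _) hcont.continuousOn ?_ ?_
  · intro r hr
    rw [interior_Icc] at hr
    exact (hasDerivAt_rho hr.1 hr.2).differentiableAt.differentiableWithinAt
  · intro r hr
    rw [interior_Icc] at hr
    rw [(hasDerivAt_rho hr.1 hr.2).deriv, rhoPrime]
    exact div_nonneg (sub_nonneg.mpr (arccos_le_pi r)) pi_pos.le

lemma mapsTo_rho : Set.MapsTo rho (Set.Icc (-1) 1) (Set.Icc (-1) 1) := fun r hr =>
  ⟨by linarith [rho_neg_one, monotoneOn_rho (by norm_num) hr hr.1],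
    rho_one ▸ monotoneOn_rho hr (by norm_num) hr.2⟩

lemma mul_rho_mul_div_self (c s : ℝ) : c * rho (c * s / c) = c * rho s := by
  rcases eq_or_ne c 0 with rfl | hc
  · simp
  · rw [mul_div_cancel_left₀ s hc]

lemma Kker_zero_succ {d : ℕ} (ℓ : ℕ) (v w : EuclideanSpace ℝ (Fin d)) :
    Kker 0 (ℓ + 1) v w =
      √(Kker 0 ℓ v v * Kker 0 ℓ w w) * rho (Kker 0 ℓ v w / √(Kker 0 ℓ v v * Kker 0 ℓ w w)) := by
  simp [Kker]

lemma Kker_zero_self {d : ℕ} (ℓ : ℕ) (v : EuclideanSpace ℝ (Fin d)) :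
    Kker 0 ℓ v v = ‖v‖ ^ 2 := by
  induction ℓ with
  | zero => exact real_inner_self_eq_norm_sq v
  | succ ℓ ih =>
    rw [Kker_zero_succ, ih, sqrt_mul_self (by positivity)]
    simpa [rho_one] using mul_rho_mul_div_self (‖v‖ ^ 2) 1

lemma Kker_zero_eq_mul_rho_iterate {d : ℕ} (ℓ : ℕ) (v w : EuclideanSpace ℝ (Fin d)) :
    Kker 0 ℓ v w = ‖v‖ * ‖w‖ * rho^[ℓ] (inner ℝ v w / (‖v‖ * ‖w‖)) := by
  induction ℓ with
  | zero =>
    rcases eq_or_ne (‖v‖ * ‖w‖) 0 with h | h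
    · simpa [Kker, h] using abs_nonpos_iff.mp (h ▸ abs_real_inner_le_norm v w)
    · exact (mul_div_cancel₀ _ h).symm
  | succ ℓ ih =>
    have hnorm : √(‖v‖ ^ 2 * ‖w‖ ^ 2) = ‖v‖ * ‖w‖ := by
      rw [← mul_pow, sqrt_sq (by positivity)]
    rw [Kker_zero_succ, Kker_zero_self, Kker_zero_self, hnorm, ih, mul_rho_mul_div_self,
      Function.iterate_succ_apply']

theorem Kker_no_bias_iterate_general {d : ℕ}
    (x x' : EuclideanSpace ℝ (Fin d)) :
    ∀ ℓ : ℕ,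
      Kker (0 : ℝ) ℓ x x' =
          ‖x‖ * ‖x'‖ * rho^[ℓ] ((inner ℝ x x' : ℝ) / (‖x‖ * ‖x'‖)) ∧
      ‖x‖ * ‖x'‖ * rho^[ℓ] (-1) ≤ Kker (0 : ℝ) ℓ x x' ∧
      Kker (0 : ℝ) ℓ x x' ≤ ‖x‖ * ‖x'‖ * rho^[ℓ] 1 ∧
      ‖x‖ * ‖x'‖ * rho^[ℓ] (1 : ℝ) = ‖x‖ * ‖x'‖ := by
  intro ℓ
  have hcos : inner ℝ x x' / (‖x‖ * ‖x'‖) ∈ Set.Icc (-1 : ℝ) 1 :=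
    abs_le.mp (abs_real_inner_div_norm_mul_norm_le_one x x')
  have hmono := monotoneOn_rho.iterate mapsTo_rho ℓ
  have hnorm : 0 ≤ ‖x‖ * ‖x'‖ := by positivity
  rw [Kker_zero_eq_mul_rho_iterate]
  refine ⟨rfl, ?_, ?_, by rw [Function.iterate_fixed rho_one, mul_one]⟩
  · exact mul_le_mul_of_nonneg_left (hmono (by norm_num) hcos hcos.1) hnorm
  · exact mul_le_mul_of_nonneg_left (hmono hcos (by norm_num) hcos.2) hnorm

/-- In the bias-free case `σ_b = 0`, for every `ℓ`,
`K^(ℓ)(x,x') = ‖x‖·‖x'‖·ρ^ℓ(⟪x,x'⟫/(‖x‖·‖x'‖))`; consequently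
`‖x‖·‖x'‖·ρ^ℓ(−1) ≤ K^(ℓ)(x,x') ≤ ‖x‖·‖x'‖·ρ^ℓ(1) = ‖x‖·‖x'‖`. -/
theorem Kker_no_bias_iterate {d : ℕ}
    (x x' : EuclideanSpace ℝ (Fin d)) (hx : x ≠ 0) (hx' : x' ≠ 0) :
    ∀ ℓ : ℕ,
      Kker (0 : ℝ) ℓ x x' =
          ‖x‖ * ‖x'‖ * rho^[ℓ] ((inner ℝ x x' : ℝ) / (‖x‖ * ‖x'‖)) ∧
      ‖x‖ * ‖x'‖ * rho^[ℓ] (-1) ≤ Kker (0 : ℝ) ℓ x x' ∧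
      Kker (0 : ℝ) ℓ x x' ≤ ‖x‖ * ‖x'‖ * rho^[ℓ] 1 ∧
      ‖x‖ * ‖x'‖ * rho^[ℓ] (1 : ℝ) = ‖x‖ * ‖x'‖ :=
  Kker_no_bias_iterate_general x x'
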